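/- Let δ ∈ (0,1], let (𝓕_k)_{k ≥ 0} be a filtration, and let (X_k)_{k ≥ 0} be an adapted sequence of integrable real random variables with 𝔼[X_k | 𝓕_{k−1}] = 0 almost surely (with 𝓕_{−1} the trivial σ-algebra) and 𝔼[|X_k|^{1+δ}] ≤ Υ for every k, where Υ > 0. Then for every integer T ≥ 1 and every real c > 0: P( Σ_{k=0}^{T−1} X_k > c T ) ≤ 2^{1−δ} · Υ · c^{−(1+δ)} · T^{−δ}. -/

import Mathlib

open MeasureTheory Real
open scoped ENNReal NNReal

noncomputable def phiSgn (q x : ℝ) : ℝ := if x < 0 then -(|x| ^ q) else |x| ^ q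

lemma phiSgn_measurable {q : ℝ} (hq : 0 ≤ q) : Measurable (phiSgn q) := by
  unfold phiSgn
  have habs : Measurable fun x : ℝ => |x| ^ q :=
    ((Real.continuous_rpow_const hq).comp continuous_abs).measurable
  exact Measurable.ite measurableSet_Iio habs.neg habs

lemma phiSgn_abs {q : ℝ} (hq : 0 < q) (x : ℝ) : |phiSgn q x| = |x| ^ q := by
  unfold phiSgn
  split_ifs with h
  · rw [abs_neg, abs_of_nonneg (rpow_nonneg (abs_nonneg x) q)]
  · rw [abs_of_nonneg (rpow_nonneg (abs_nonneg x) q)]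

lemma phiSgn_neg {q : ℝ} (hq : 0 < q) (x y : ℝ) : phiSgn q (-x) * (-y) = phiSgn q x * y := by
  unfold phiSgn
  rcases lt_trichotomy x 0 with h | h | h
  · rw [if_neg (not_lt.2 (by linarith : (0:ℝ) ≤ -x)), if_pos h, abs_neg]; ring
  · subst h; simp [Real.zero_rpow hq.ne']
  · rw [if_pos (by linarith : -x < 0), if_neg (not_lt.2 h.le), abs_neg]; ring

lemma phiSgn_of_pos {q x : ℝ} (hx : 0 < x) : phiSgn q x = x ^ q := by
  rw [phiSgn, if_neg (not_lt.2 hx.le), abs_of_pos hx]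

lemma phiSgn_zero {q : ℝ} (hq : 0 < q) : phiSgn q 0 = 0 := by
  simp [phiSgn, Real.zero_rpow hq.ne']

lemma rpow_subadd {a b q : ℝ} (ha : 0 ≤ a) (hb : 0 ≤ b) (hq0 : 0 ≤ q) (hq1 : q ≤ 1) :
    (a + b) ^ q ≤ a ^ q + b ^ q := by
  have h := NNReal.rpow_add_le_add_rpow a.toNNReal b.toNNReal hq0 hq1
  have h2 := NNReal.coe_le_coe.2 h
  rw [← Real.toNNReal_add ha hb] at h2
  simpa [NNReal.coe_rpow, Real.coe_toNNReal _ (by linarith : (0:ℝ) ≤ a + b),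
    Real.coe_toNNReal _ ha, Real.coe_toNNReal _ hb] using h2

lemma concave_half {q s : ℝ} (hq0 : 0 ≤ q) (hq1 : q ≤ 1) (hs : 0 ≤ s) :
    1 + s ^ q ≤ 2 ^ (1 - q) * (1 + s) ^ q := by
  have hcon := Real.concaveOn_rpow hq0 hq1
  have h := hcon.2 (Set.mem_Ici.2 (zero_le_one)) (Set.mem_Ici.2 hs)
    (by norm_num : (0:ℝ) ≤ 1/2) (by norm_num : (0:ℝ) ≤ 1/2) (by norm_num)
  simp only [smul_eq_mul, Real.one_rpow] at h
  -- h : 1/2 * 1 + 1/2 * s^q ≤ (1/2 * 1 + 1/2 * s) ^ q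
  have he : (1/2 * 1 + 1/2 * s : ℝ) = (1 + s) / 2 := by ring
  rw [he] at h
  have hd : ((1 + s) / 2 : ℝ) ^ q = (1 + s) ^ q / 2 ^ q :=
    Real.div_rpow (by linarith) (by norm_num) q
  have h2 : (2:ℝ) ^ (1 - q) = 2 / 2 ^ q := by
    rw [Real.rpow_sub (by norm_num : (0:ℝ) < 2), Real.rpow_one]
  have h2q : (0:ℝ) < 2 ^ q := Real.rpow_pos_of_pos (by norm_num) q
  rw [hd, le_div_iff₀ h2q] at h
  rw [h2, div_mul_eq_mul_div, le_div_iff₀ h2q]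
  nlinarith [h]

lemma mono_helper {f f' : ℝ → ℝ} {t : ℝ}
    (hd : ∀ x, HasDerivAt f (f' x) x)
    (h0 : ∀ x, 0 < x → x < t → 0 ≤ f' x) (ht : 0 ≤ t) : f 0 ≤ f t := by
  rcases eq_or_lt_of_le ht with h | h
  · rw [← h]
  have hmono : MonotoneOn f (Set.Icc 0 t) := by
    apply monotoneOn_of_deriv_nonneg (convex_Icc 0 t)
    · exact Continuous.continuousOn
        (continuous_iff_continuousAt.2 fun x => (hd x).continuousAt)
    · intro x _; exact (hd x).differentiableAt.differentiableWithinAt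
    · intro x hx
      rw [interior_Icc] at hx
      rw [(hd x).deriv]
      exact h0 x hx.1 hx.2
  exact hmono (Set.left_mem_Icc.2 ht) (Set.right_mem_Icc.2 ht) ht

lemma key_t {q : ℝ} (hq0 : 0 < q) (hq1 : q ≤ 1) (t : ℝ) :
    |1 + t| ^ (1 + q) ≤ 1 + (1 + q) * t + 2 ^ (1 - q) * |t| ^ (1 + q) := by
  set p : ℝ := 1 + q with hp
  have hp1 : (1:ℝ) ≤ p := by simp [hp]; linarith
  have hp0 : (0:ℝ) < p := by linarith
  have hpq : p - 1 = q := by ring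
  have hA1 : (1:ℝ) ≤ 2 ^ (1 - q) :=
    Real.one_le_rpow (by norm_num) (by linarith)
  have hA0 : (0:ℝ) < 2 ^ (1 - q) := lt_of_lt_of_le one_pos hA1
  set A : ℝ := 2 ^ (1 - q) with hAdef
  -- derivative builders
  have hder : ∀ x : ℝ, HasDerivAt (fun y : ℝ => y ^ p) (p * x ^ q) x := by
    intro x
    have := Real.hasDerivAt_rpow_const (x := x) (p := p) (Or.inr hp1)
    rwa [hpq] at this
  have hder1 : ∀ x : ℝ, HasDerivAt (fun y : ℝ => (1 + y) ^ p) (p * (1 + x) ^ q) x := by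
    intro x
    have h1 : HasDerivAt (fun y : ℝ => 1 + y) 1 x := (hasDerivAt_id x).const_add 1
    have := (hder (1 + x)).comp x h1
    simpa [Function.comp_def] using this
  have hder2 : ∀ x : ℝ, HasDerivAt (fun y : ℝ => (1 - y) ^ p) (-(p * (1 - x) ^ q)) x := by
    intro x
    have h1 : HasDerivAt (fun y : ℝ => 1 - y) (-1) x := (hasDerivAt_id x).const_sub 1
    have := (hder (1 - x)).comp x h1
    simpa [mul_comm, Function.comp_def] using this
  rcases le_or_gt 0 t with h | h
  · -- case t ≥ 0
    have habs1 : |1 + t| = 1 + t := abs_of_nonneg (by linarith)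
    have habs2 : |t| = t := abs_of_nonneg h
    rw [habs1, habs2]
    have key : (1 + t) ^ p ≤ 1 + p * t + t ^ p := by
      have hmain := mono_helper (f := fun x => 1 + p * x + x ^ p - (1 + x) ^ p)
        (f' := fun x => 0 + p * 1 + p * x ^ q - p * (1 + x) ^ q) (t := t)
        (fun x => (((hasDerivAt_const x (1:ℝ)).add
          ((hasDerivAt_id x).const_mul p)).add (hder x)).sub (hder1 x))
        (fun x hx _ => by
          have hsub : (1 + x) ^ q ≤ 1 + x ^ q := by
            have := rpow_subadd (zero_le_one) hx.le hq0.le hq1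
            simpa using this
          nlinarith) h
      norm_num [Real.zero_rpow hp0.ne', Real.one_rpow] at hmain
      linarith
    have ht : t ^ p ≤ A * t ^ p := le_mul_of_one_le_left (Real.rpow_nonneg h p) hA1
    linarith
  rcases le_or_gt (-1) t with h1 | h1
  · -- case -1 ≤ t < 0
    set u : ℝ := -t with hu
    have hu0 : 0 < u := by simp [hu]; linarith
    have hu1 : u ≤ 1 := by simp [hu]; linarith
    have habs1 : |1 + t| = 1 - u := by rw [abs_of_nonneg (by linarith)]; linarith
    have habs2 : |t| = u := by rw [abs_of_neg h]
    rw [habs1, habs2]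
    have key : (1 - u) ^ p ≤ 1 - p * u + A * u ^ p := by
      have hmain := mono_helper (f := fun x => 1 - p * x + A * x ^ p - (1 - x) ^ p)
        (f' := fun x => 0 - p * 1 + A * (p * x ^ q) - -(p * (1 - x) ^ q)) (t := u)
        (fun x => (((hasDerivAt_const x (1:ℝ)).sub
          ((hasDerivAt_id x).const_mul p)).add ((hder x).const_mul A)).sub (hder2 x))
        (fun x hx hxu => by
          have hx1 : 0 ≤ 1 - x := by linarith
          have hsub : 1 ≤ x ^ q + (1 - x) ^ q := by
            have := rpow_subadd hx.le hx1 hq0.le hq1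
            simpa using this
          have hAx : x ^ q ≤ A * x ^ q :=
            le_mul_of_one_le_left (Real.rpow_nonneg hx.le q) hA1
          nlinarith) hu0.le
      norm_num [Real.zero_rpow hp0.ne', Real.one_rpow] at hmain
      linarith
    have : 1 - p * u + A * u ^ p = 1 + p * t + A * u ^ p := by rw [hu]; ring
    linarith [key, this.symm.le]
  · -- case t < -1
    set s : ℝ := -t - 1 with hs
    have hs0 : 0 < s := by simp [hs]; linarith
    have habs1 : |1 + t| = s := by rw [abs_of_neg (by linarith : 1 + t < 0)]; linarith
    have habs2 : |t| = 1 + s := by rw [abs_of_neg (by linarith : t < 0)]; linarith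
    rw [habs1, habs2]
    have key : s ^ p ≤ 1 - p * (1 + s) + A * (1 + s) ^ p := by
      have hmain := mono_helper (f := fun x => 1 - p * (1 + x) + A * (1 + x) ^ p - x ^ p)
        (f' := fun x => 0 - p * 1 + A * (p * (1 + x) ^ q) - p * x ^ q) (t := s)
        (fun x => (((hasDerivAt_const x (1:ℝ)).sub
          (((hasDerivAt_id x).const_add 1).const_mul p)).add
            ((hder1 x).const_mul A)).sub (hder x))
        (fun x hx _ => by
          have hch := concave_half hq0.le hq1 hx.le
          nlinarith [Real.rpow_nonneg (by linarith : (0:ℝ) ≤ 1 + x) q]) hs0.le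
      norm_num [Real.zero_rpow hp0.ne', Real.one_rpow] at hmain
      have hfin : 0 ≤ 1 - p + A := by
        have : p ≤ 2 := by simp [hp]; linarith
        linarith
      linarith
    have : 1 - p * (1 + s) + A * (1 + s) ^ p = 1 + p * t + A * (1 + s) ^ p := by
      rw [hs]; ring
    linarith [key, this.symm.le]

lemma key_xy {q : ℝ} (hq0 : 0 < q) (hq1 : q ≤ 1) (x y : ℝ) :
    |x + y| ^ (1 + q) ≤ |x| ^ (1 + q) + (1 + q) * phiSgn q x * y
      + 2 ^ (1 - q) * |y| ^ (1 + q) := by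
  set p : ℝ := 1 + q with hp
  have hA1 : (1:ℝ) ≤ 2 ^ (1 - q) := Real.one_le_rpow (by norm_num) (by linarith)
  have main : ∀ x y : ℝ, 0 < x →
      |x + y| ^ p ≤ |x| ^ p + p * phiSgn q x * y + 2 ^ (1 - q) * |y| ^ p := by
    intro x y hx
    have hxp : (0:ℝ) < x ^ p := Real.rpow_pos_of_pos hx p
    have hkey := key_t hq0 hq1 (y / x)
    have hxpe : x ^ p = x * x ^ q := by
      rw [hp, Real.rpow_add hx, Real.rpow_one]
    have l1 : |1 + y / x| = |x + y| / x := by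
      rw [show (1 : ℝ) + y / x = (x + y) / x by field_simp, abs_div, abs_of_pos hx]
    calc |x + y| ^ p = (|x + y| / x) ^ p * x ^ p := by
          rw [Real.div_rpow (abs_nonneg _) hx.le, div_mul_cancel₀ _ hxp.ne']
      _ = |1 + y / x| ^ p * x ^ p := by rw [l1]
      _ ≤ (1 + p * (y / x) + 2 ^ (1 - q) * |y / x| ^ p) * x ^ p :=
          mul_le_mul_of_nonneg_right hkey hxp.le
      _ = |x| ^ p + p * phiSgn q x * y + 2 ^ (1 - q) * |y| ^ p := by
          rw [abs_div, abs_of_pos hx, Real.div_rpow (abs_nonneg _) hx.le,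
            phiSgn_of_pos hx, hxpe]
          field_simp
  rcases lt_trichotomy x 0 with h | h | h
  · have hmain := main (-x) (-y) (by linarith)
    have e1 : -x + -y = -(x + y) := by ring
    rw [e1, abs_neg, abs_neg, abs_neg, mul_assoc p, phiSgn_neg hq0,
      ← mul_assoc] at hmain
    exact hmain
  · subst h
    rw [zero_add, phiSgn_zero hq0, abs_zero, Real.zero_rpow (by positivity : p ≠ 0)]
    have : |y| ^ p ≤ 2 ^ (1 - q) * |y| ^ p :=
      le_mul_of_one_le_left (Real.rpow_nonneg (abs_nonneg y) p) hA1
    linarith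
  · exact main x y h

/-- heavy-tailed tail bound for a martingale difference sequence with
bounded `(1+δ)`-th moments: `P(Σ_{k<T} X_k > cT) ≤ 2^{1−δ} Υ c^{−(1+δ)} T^{−δ}`. -/
theorem stmt_15 {Ω : Type*} {m0 : MeasurableSpace Ω} {ℙ : Measure Ω}
    [IsProbabilityMeasure ℙ] (ℱ : Filtration ℕ m0)
    (δ : ℝ) (hδ : δ ∈ Set.Ioc (0 : ℝ) 1) (Υ : ℝ) (hΥ : 0 < Υ)
    (X : ℕ → Ω → ℝ) (hadapted : Adapted ℱ X)
    (hint : ∀ k, Integrable (X k) ℙ)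
    (h0 : ∫ ω, X 0 ω ∂ℙ = 0)
    (hmart : ∀ k, ℙ[X (k + 1)|ℱ k] =ᵐ[ℙ] 0)
    (hmomint : ∀ k, Integrable (fun ω => |X k ω| ^ (1 + δ)) ℙ)
    (hmom : ∀ k, ∫ ω, |X k ω| ^ (1 + δ) ∂ℙ ≤ Υ)
    (T : ℕ) (hT : 1 ≤ T) (c : ℝ) (hc : 0 < c) :
    ℙ {ω | c * T < ∑ k ∈ Finset.range T, X k ω}
      ≤ ENNReal.ofReal (2 ^ (1 - δ) * Υ * c ^ (-(1 + δ)) * (T : ℝ) ^ (-δ)) := by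
  obtain ⟨hδ0, hδ1⟩ := hδ
  have hp0 : (0:ℝ) < 1 + δ := by linarith
  set P : ℝ≥0∞ := ENNReal.ofReal (1 + δ) with hPdef
  have hP0 : P ≠ 0 := by
    simp [hPdef, ENNReal.ofReal_eq_zero]; linarith
  have hPtop : P ≠ ∞ := ENNReal.ofReal_ne_top
  have hPto : P.toReal = 1 + δ := ENNReal.toReal_ofReal hp0.le
  set D : ℝ≥0∞ := ENNReal.ofReal δ with hDdef
  have hD0 : D ≠ 0 := by simp [hDdef, ENNReal.ofReal_eq_zero]; linarith
  have hDtop : D ≠ ∞ := ENNReal.ofReal_ne_top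
  have hDto : D.toReal = δ := ENNReal.toReal_ofReal hδ0.le
  set S : ℕ → Ω → ℝ := fun n ω => ∑ k ∈ Finset.range n, X k ω with hSdef
  have hA1 : (1:ℝ) ≤ 2 ^ (1 - δ) := Real.one_le_rpow (by norm_num) (by linarith)
  have hA0 : (0:ℝ) < 2 ^ (1 - δ) := lt_of_lt_of_le one_pos hA1
  -- measurability
  have hXm : ∀ k, AEStronglyMeasurable (X k) ℙ := fun k =>
    ((hadapted k).mono (ℱ.le k) le_rfl).aestronglyMeasurable
  have hXmem : ∀ k, MemLp (X k) P ℙ := by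
    intro k
    refine (memLp_norm_rpow_iff (q := P) (p := P) (hXm k) hP0 hPtop).1 ?_
    rw [ENNReal.div_self hP0 hPtop, memLp_one_iff_integrable, hPto]
    exact (hmomint k).congr (Filter.Eventually.of_forall fun ω => by
      simp [Real.norm_eq_abs])
  have hSmem : ∀ n, MemLp (S n) P ℙ := by
    intro n
    have h := memLp_finsetSum' (Finset.range n) (fun k _ => hXmem k)
    have he : (∑ i ∈ Finset.range n, X i) = S n := by
      funext ω; simp [hSdef]
    rwa [he] at h
  have hSint : ∀ n, Integrable (fun ω => |S n ω| ^ (1 + δ)) ℙ := by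
    intro n
    have := (hSmem n).integrable_norm_rpow hP0 hPtop
    rw [hPto] at this
    exact this.congr (Filter.Eventually.of_forall fun ω => by simp [Real.norm_eq_abs])
  have hSmeasF : ∀ m, StronglyMeasurable[ℱ m] (S (m + 1)) := by
    intro m
    apply Finset.stronglyMeasurable_fun_sum
    intro k hk
    exact ((hadapted k).mono (ℱ.mono (Nat.lt_succ_iff.1 (Finset.mem_range.1 hk))) le_rfl).stronglyMeasurable
  -- the middle term vanishes
  have hGX : ∀ n, Integrable (phiSgn δ ∘ (S n) * X n) ℙ ∧
      ∫ ω, (phiSgn δ ∘ (S n) * X n) ω ∂ℙ = 0 := by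
    intro n
    cases n with
    | zero =>
      have hz : (phiSgn δ ∘ (S 0) * X 0) = fun _ => 0 := by
        funext ω
        simp [hSdef, Pi.mul_apply, Function.comp, phiSgn_zero hδ0]
      rw [hz]
      exact ⟨integrable_zero _ _ _, integral_zero _ _⟩
    | succ m =>
      set g : Ω → ℝ := phiSgn δ ∘ (S (m + 1)) with hgdef
      have hg_smF : StronglyMeasurable[ℱ m] g :=
        ((phiSgn_measurable hδ0.le).comp (hSmeasF m).measurable).stronglyMeasurable
      have hg_aesm : AEStronglyMeasurable g ℙ :=
        (hg_smF.mono (ℱ.le m)).aestronglyMeasurable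
      -- g ∈ L^{P/D}
      have hgQ : MemLp g (P / D) ℙ := by
        have h1 : MemLp (fun ω => ‖S (m+1) ω‖ ^ D.toReal) (P / D) ℙ :=
          (hSmem (m+1)).norm_rpow_div D
        refine h1.of_le hg_aesm (Filter.Eventually.of_forall fun ω => ?_)
        rw [hgdef]
        simp only [Function.comp, Real.norm_eq_abs, hDto]
        rw [phiSgn_abs hδ0]
        rw [abs_of_nonneg (Real.rpow_nonneg (abs_nonneg _) δ)]
      -- Hölder: g * X (m+1) integrable
      have hsum : D + 1 = P := by
        rw [hDdef, hPdef, ← ENNReal.ofReal_one,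
          ← ENNReal.ofReal_add hδ0.le zero_le_one, add_comm δ 1]
      have hpqr : (1:ℝ≥0∞) / 1 = 1 / (P / D) + 1 / P := by
        simp only [one_div]
        rw [inv_one, ENNReal.inv_div (Or.inl hDtop) (Or.inl hD0), ← one_div P,
          ENNReal.div_add_div_same, hsum, ENNReal.div_self hP0 hPtop]
      have hgX_int : Integrable (g * X (m + 1)) ℙ := by
        have := (hXmem (m + 1)).smul hgQ (hpqr := ⟨by simpa only [one_div] using hpqr.symm⟩)
        rw [memLp_one_iff_integrable] at this
        exact this.congr (Filter.Eventually.of_forall fun ω => rfl)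
      refine ⟨hgX_int, ?_⟩
      haveI : SigmaFinite (ℙ.trim (ℱ.le m)) := by infer_instance
      have hmul := condExp_mul_of_stronglyMeasurable_left hg_smF hgX_int (hint (m + 1))
      have hcond0 : ℙ[g * X (m + 1)|ℱ m] =ᵐ[ℙ] 0 := by
        refine hmul.trans ?_
        filter_upwards [hmart m] with ω hω
        simp [Pi.mul_apply, hω]
      calc ∫ ω, (g * X (m + 1)) ω ∂ℙ = ∫ ω, (ℙ[g * X (m + 1)|ℱ m]) ω ∂ℙ :=
            (integral_condExp (ℱ.le m)).symm
        _ = ∫ _ω, (0:ℝ) ∂ℙ := integral_congr_ae hcond0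
        _ = 0 := integral_zero _ _
  -- recursion
  have hrec : ∀ n, ∫ ω, |S (n+1) ω| ^ (1 + δ) ∂ℙ
      ≤ ∫ ω, |S n ω| ^ (1 + δ) ∂ℙ + 2 ^ (1 - δ) * Υ := by
    intro n
    obtain ⟨hgXint, hgXzero⟩ := hGX n
    have hptwise : ∀ ω, |S (n+1) ω| ^ (1 + δ) ≤ |S n ω| ^ (1 + δ)
        + (1 + δ) * ((phiSgn δ ∘ (S n) * X n) ω) + 2 ^ (1 - δ) * |X n ω| ^ (1 + δ) := by
      intro ω
      have hkey := key_xy hδ0 hδ1 (S n ω) (X n ω)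
      have hS1 : S (n+1) ω = S n ω + X n ω := Finset.sum_range_succ _ _
      rw [hS1]
      simp only [Pi.mul_apply, Function.comp]
      linarith [hkey]
    have hRint : Integrable (fun ω => |S n ω| ^ (1 + δ)
        + (1 + δ) * ((phiSgn δ ∘ (S n) * X n) ω) + 2 ^ (1 - δ) * |X n ω| ^ (1 + δ)) ℙ :=
      ((hSint n).add (hgXint.const_mul (1 + δ))).add ((hmomint n).const_mul _)
    calc ∫ ω, |S (n+1) ω| ^ (1 + δ) ∂ℙ
        ≤ ∫ ω, (|S n ω| ^ (1 + δ) + (1 + δ) * ((phiSgn δ ∘ (S n) * X n) ω)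
            + 2 ^ (1 - δ) * |X n ω| ^ (1 + δ)) ∂ℙ :=
          integral_mono (hSint (n+1)) hRint hptwise
      _ = ∫ ω, |S n ω| ^ (1 + δ) ∂ℙ + (1 + δ) * ∫ ω, (phiSgn δ ∘ (S n) * X n) ω ∂ℙ
            + 2 ^ (1 - δ) * ∫ ω, |X n ω| ^ (1 + δ) ∂ℙ := by
          have hint1 : Integrable (fun ω => |S n ω| ^ (1 + δ)
              + (1 + δ) * ((phiSgn δ ∘ (S n) * X n) ω)) ℙ :=
            (hSint n).add (hgXint.const_mul (1 + δ))
          have hint2 : Integrable (fun ω => 2 ^ (1 - δ) * |X n ω| ^ (1 + δ)) ℙ :=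
            (hmomint n).const_mul _
          have hint3 : Integrable (fun ω => (1 + δ) * ((phiSgn δ ∘ (S n) * X n) ω)) ℙ :=
            hgXint.const_mul _
          rw [integral_add hint1 hint2, integral_add (hSint n) hint3,
            integral_const_mul, integral_const_mul]
      _ ≤ ∫ ω, |S n ω| ^ (1 + δ) ∂ℙ + 2 ^ (1 - δ) * Υ := by
          rw [hgXzero, mul_zero, add_zero]
          have := mul_le_mul_of_nonneg_left (hmom n) hA0.le
          linarith
  -- induction
  have hbound : ∀ n : ℕ, ∫ ω, |S n ω| ^ (1 + δ) ∂ℙ ≤ n * (2 ^ (1 - δ) * Υ) := by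
    intro n
    induction n with
    | zero =>
      simp [hSdef, Real.zero_rpow hp0.ne']
    | succ m ih =>
      calc ∫ ω, |S (m+1) ω| ^ (1 + δ) ∂ℙ
          ≤ ∫ ω, |S m ω| ^ (1 + δ) ∂ℙ + 2 ^ (1 - δ) * Υ := hrec m
        _ ≤ m * (2 ^ (1 - δ) * Υ) + 2 ^ (1 - δ) * Υ := by linarith
        _ = (m + 1 : ℕ) * (2 ^ (1 - δ) * Υ) := by push_cast; ring
  -- Markov
  have hTpos : (0:ℝ) < T := by exact_mod_cast hT
  set ε : ℝ := (c * T) ^ (1 + δ) with hεdef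
  have hε0 : 0 < ε := Real.rpow_pos_of_pos (by positivity) _
  have hsub : {ω | c * T < ∑ k ∈ Finset.range T, X k ω}
      ⊆ {ω | ε ≤ |S T ω| ^ (1 + δ)} := by
    intro ω hω
    simp only [Set.mem_setOf_eq] at hω ⊢
    have h1 : c * T ≤ |S T ω| := le_trans hω.le (le_abs_self _)
    exact Real.rpow_le_rpow (by positivity) h1 hp0.le
  have hmark := mul_meas_ge_le_integral_of_nonneg
    (μ := ℙ) (f := fun ω => |S T ω| ^ (1 + δ))
    (Filter.Eventually.of_forall fun ω => Real.rpow_nonneg (abs_nonneg _) _)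
    (hSint T) ε
  have hRHS0 : 0 ≤ 2 ^ (1 - δ) * Υ * c ^ (-(1 + δ)) * (T : ℝ) ^ (-δ) := by positivity
  have hfin : (ℙ {ω | ε ≤ |S T ω| ^ (1 + δ)}) ≤
      ENNReal.ofReal (2 ^ (1 - δ) * Υ * c ^ (-(1 + δ)) * (T : ℝ) ^ (-δ)) := by
    rw [ENNReal.le_ofReal_iff_toReal_le (measure_ne_top _ _) hRHS0]
    have h2 : (ℙ {ω | ε ≤ |S T ω| ^ (1 + δ)}).toReal ≤ (T * (2 ^ (1 - δ) * Υ)) / ε := by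
      rw [le_div_iff₀ hε0]
      calc (ℙ {ω | ε ≤ |S T ω| ^ (1 + δ)}).toReal * ε
          = ε * (ℙ {ω | ε ≤ |S T ω| ^ (1 + δ)}).toReal := by ring
        _ ≤ ∫ ω, |S T ω| ^ (1 + δ) ∂ℙ := hmark
        _ ≤ T * (2 ^ (1 - δ) * Υ) := hbound T
    refine le_trans h2 (le_of_eq ?_)
    rw [hεdef, Real.mul_rpow hc.le hTpos.le, Real.rpow_neg hc.le,
      Real.rpow_neg hTpos.le]
    have hTsplit : (T:ℝ) ^ (1 + δ) = T * (T:ℝ) ^ δ := by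
      rw [Real.rpow_add hTpos, Real.rpow_one]
    rw [hTsplit]
    have h1 : c ^ (1 + δ) ≠ 0 := (Real.rpow_pos_of_pos hc _).ne'
    have h2 : ((T:ℝ)) ^ δ ≠ 0 := (Real.rpow_pos_of_pos hTpos _).ne'
    field_simp
  exact le_trans (measure_mono hsub) hfin
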